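/- For all integers u ≥ v ≥ 2, the inequality 3·E(u)·E_s(u) + 3·E(u)·E(v) + 3·E_s(u)·E_s(v) + 3·E(v)·E_s(v) ≥ (E(u) + E(v))² holds. -/
import Mathlib


/-- `Eng K` is the largest squared modulus of a point of the modified
`2^K`-ary QAM constellation. -/
noncomputable def Eng (K : ℕ) : ℝ :=
  if K = 2 then 2
  else if K = 3 then 10
  else if K % 2 = 0 then 2 * ((2 : ℝ) ^ (K / 2) - 1) ^ 2
  else ((2 : ℝ) ^ ((K - 1) / 2) - 1) ^ 2 + (3 * (2 : ℝ) ^ ((K - 3) / 2) - 1) ^ 2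

/-- `EngS K` is the larger squared modulus among the nearest neighbors of a
largest-energy corner point of the modified `2^K`-ary QAM constellation
(with the convention `EngS 2 = EngS 3 = 2`). -/
noncomputable def EngS (K : ℕ) : ℝ :=
  if K = 2 then 2
  else if K = 3 then 2
  else if K % 2 = 0 then ((2 : ℝ) ^ (K / 2) - 1) ^ 2 + ((2 : ℝ) ^ (K / 2) - 3) ^ 2
  else ((2 : ℝ) ^ ((K - 1) / 2) - 3) ^ 2 + (3 * (2 : ℝ) ^ ((K - 3) / 2) - 1) ^ 2

/-- `EngT K` is the smaller squared modulus among the nearest neighbors of a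
largest-energy corner point of the modified `2^K`-ary QAM constellation
(with the convention `EngT 2 = EngT 3 = 2`). -/
noncomputable def EngT (K : ℕ) : ℝ :=
  if K = 2 then 2
  else if K = 3 then 2
  else if K % 2 = 0 then ((2 : ℝ) ^ (K / 2) - 1) ^ 2 + ((2 : ℝ) ^ (K / 2) - 3) ^ 2
  else ((2 : ℝ) ^ ((K - 1) / 2) - 1) ^ 2 + (3 * (2 : ℝ) ^ ((K - 3) / 2) - 3) ^ 2

lemma eng_key (K : ℕ) (hK : 4 ≤ K) : 10 ≤ Eng K ∧ Eng K ≤ 2 * EngS K := by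
  have h2 : K ≠ 2 := by omega
  have h3 : K ≠ 3 := by omega
  rcases Nat.even_or_odd K with he | ho
  · have hm : K % 2 = 0 := Nat.even_iff.mp he
    rw [Eng, EngS, if_neg h2, if_neg h3, if_pos hm, if_neg h2, if_neg h3, if_pos hm]
    have hx : (4:ℝ) ≤ 2 ^ (K/2) := by
      calc (4:ℝ) = 2^2 := by norm_num
      _ ≤ 2 ^ (K/2) := by
        apply pow_le_pow_right₀ one_le_two
        omega
    constructor <;> nlinarith [sq_nonneg ((2:ℝ)^(K/2) - 3)]
  · have hm' : K % 2 = 1 := Nat.odd_iff.mp ho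
    have hm : ¬ K % 2 = 0 := by omega
    rw [Eng, EngS, if_neg h2, if_neg h3, if_neg hm, if_neg h2, if_neg h3, if_neg hm]
    have h1 : (K-1)/2 = (K-3)/2 + 1 := by omega
    have hp : (2:ℝ) ^ ((K-1)/2) = 2 * 2 ^ ((K-3)/2) := by
      rw [h1, pow_succ]; ring
    rw [hp]
    have ht : (2:ℝ) ≤ 2 ^ ((K-3)/2) := by
      calc (2:ℝ) = 2^1 := by norm_num
      _ ≤ 2 ^ ((K-3)/2) := by
        apply pow_le_pow_right₀ one_le_two
        omega
    set t := (2:ℝ) ^ ((K-3)/2)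
    constructor <;> nlinarith [sq_nonneg (t-1)]

/-- The energy inequality
`3 E(u) E_s(u) + 3 E(u) E(v) + 3 E_s(u) E_s(v) + 3 E(v) E_s(v) ≥ (E(u) + E(v))²`
for `u ≥ v ≥ 2`. -/
theorem eng_quadratic_inequality (u v : ℕ) (hv : 2 ≤ v) (hvu : v ≤ u) :
    (Eng u + Eng v) ^ 2 ≤
      3 * Eng u * EngS u + 3 * Eng u * Eng v +
        3 * EngS u * EngS v + 3 * Eng v * EngS v := by
  by_cases hu : u ≤ 3
  · interval_cases u <;> interval_cases v <;> norm_num [Eng, EngS]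
  · push_neg at hu
    obtain ⟨ha, has⟩ := eng_key u (by omega)
    have hs : (5:ℝ) ≤ EngS u := by linarith
    rcases Nat.lt_or_ge v 4 with hv4 | hv4
    · interval_cases v
      · have hb : Eng 2 = 2 := by norm_num [Eng]
        have htb : EngS 2 = 2 := by norm_num [EngS]
        rw [hb, htb]
        nlinarith [mul_nonneg (by linarith : (0:ℝ) ≤ Eng u)
          (by linarith : (0:ℝ) ≤ 2 * EngS u - Eng u)]
      · have hb : Eng 3 = 10 := by norm_num [Eng]
        have htb : EngS 3 = 2 := by norm_num [EngS]
        rw [hb, htb]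
        nlinarith [mul_nonneg (by linarith : (0:ℝ) ≤ Eng u)
          (by linarith : (0:ℝ) ≤ 2 * EngS u - Eng u)]
    · obtain ⟨hb, hbt⟩ := eng_key v (by omega)
      have ht : (5:ℝ) ≤ EngS v := by linarith
      nlinarith [mul_nonneg (by linarith : (0:ℝ) ≤ Eng u)
          (by linarith : (0:ℝ) ≤ 2 * EngS u - Eng u),
        mul_nonneg (by linarith : (0:ℝ) ≤ Eng v)
          (by linarith : (0:ℝ) ≤ 2 * EngS v - Eng v),
        mul_nonneg (by linarith : (0:ℝ) ≤ EngS u)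
          (by linarith : (0:ℝ) ≤ EngS v)]
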